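/- arXiv:2012.08909 — 6 statements merged into one kernel-verified Lean document; each statement's English description precedes it below -/
import Mathlib

section
/- Let m be a positive integer and t a positive integer, and let N_1, …, N_t be nonnegative reals with ∑_{i=1}^t (N_i + 1) = m and ∑_{i=1}^t N_i(N_i + 1) ≤ m·N* for some N* ≥ 0. Then t ≥ m / (N* + 1). -/
/-! Adding the two hypotheses gives `∑ (N i + 1)² ≤ m (N* + 1)`, while Cauchy–Schwarz gives
`m² = (∑ (N i + 1))² ≤ t ∑ (N i + 1)²`; hence `m² ≤ t m (N* + 1)`. Dividing by `m (N* + 1)` yields the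
bound when this is positive; otherwise `m / (N* + 1) ≤ 0` already. -/

open Finset

section LinearOrderedField

variable {α : Type*} [Field α] [LinearOrder α] [IsStrictOrderedRing α]

theorem div_le_of_sq_le_mul_mul {a c k : α} (hk : 0 ≤ k) (h : a ^ 2 ≤ k * (a * c)) :
    a / c ≤ k := by
  rcases le_or_gt (a * c) 0 with hac | hac
  · exact (div_nonpos_iff.2 (mul_nonpos_iff.1 hac)).trans hk
  · calc a / c = a ^ 2 / (a * c) := by
          rw [sq, mul_div_mul_left _ _ (left_ne_zero_of_mul hac.ne')]
      _ ≤ k := div_le_of_le_mul₀ hac.le hk h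

theorem sum_div_le_card_of_sum_sq_le {ι : Type*} (s : Finset ι) (f : ι → α) {c : α}
    (h : ∑ i ∈ s, f i ^ 2 ≤ (∑ i ∈ s, f i) * c) :
    (∑ i ∈ s, f i) / c ≤ #s :=
  div_le_of_sq_le_mul_mul (Nat.cast_nonneg _)
    ((sq_sum_le_card_mul_sum_sq).trans (mul_le_mul_of_nonneg_left h (Nat.cast_nonneg _)))

end LinearOrderedField

theorem stmt4_general (m : ℕ) (t : ℕ) (N : ℕ → ℝ) (Nstar : ℝ)
    (h1 : ∑ i ∈ Finset.range t, (N i + 1) = (m : ℝ))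
    (h2 : ∑ i ∈ Finset.range t, N i * (N i + 1) ≤ (m : ℝ) * Nstar) :
    (m : ℝ) / (Nstar + 1) ≤ (t : ℝ) := by
  have hsq : ∑ i ∈ range t, (N i + 1) ^ 2 ≤ (∑ i ∈ range t, (N i + 1)) * (Nstar + 1) :=
    calc ∑ i ∈ range t, (N i + 1) ^ 2
        = ∑ i ∈ range t, N i * (N i + 1) + ∑ i ∈ range t, (N i + 1) := by
          rw [← sum_add_distrib]; congr 1; ext i; ring
      _ ≤ (∑ i ∈ range t, (N i + 1)) * (Nstar + 1) := by rw [h1]; linarith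
  simpa only [h1, card_range] using sum_div_le_card_of_sum_sq_le (range t) (fun i => N i + 1) hsq

/-- The key counting inequality in the greedy analysis: if
`∑ (N i + 1) = m` and `∑ N i * (N i + 1) ≤ m * N*`, then `t ≥ m / (N* + 1)`. -/
theorem stmt4 (m : ℕ) (t : ℕ) (N : ℕ → ℝ) (Nstar : ℝ)
    (hm : 0 < m) (ht : 0 < t)
    (hN : ∀ i ∈ Finset.range t, 0 ≤ N i) (hNs : 0 ≤ Nstar)
    (h1 : ∑ i ∈ Finset.range t, (N i + 1) = (m : ℝ))
    (h2 : ∑ i ∈ Finset.range t, N i * (N i + 1) ≤ (m : ℝ) * Nstar) :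
    (m : ℝ) / (Nstar + 1) ≤ (t : ℝ) :=
  stmt4_general m t N Nstar h1 h2
end

section
/- Let M be a maximal 0-1 timed matching of a temporal graph with edge set E, and let OPT be a maximum 0-1 timed matching. If every edge of E overlaps with at most k other edges, then |M| ≥ |OPT| / (k + 1). -/
/-- Two edges of a temporal graph overlap if they are distinct, share an endpoint,
and exist at a common timestep. -/
def Overlaps {V : Type*} (τ : Sym2 V → Set ℕ) (e f : Sym2 V) : Prop :=
  e ≠ f ∧ (∃ v, v ∈ e ∧ v ∈ f) ∧ (τ e ∩ τ f).Nonempty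

/-- A 0-1 timed matching: no two edges of `M` overlap. -/
def IsTimedMatching {V : Type*} (τ : Sym2 V → Set ℕ) (M : Set (Sym2 V)) : Prop :=
  ∀ e ∈ M, ∀ f ∈ M, ¬ Overlaps τ e f

theorem overlaps_symm {V : Type*} (τ : Sym2 V → Set ℕ) {e f : Sym2 V}
    (h : Overlaps τ e f) : Overlaps τ f e := by
  obtain ⟨hne, ⟨v, hv1, hv2⟩, ht⟩ := h
  exact ⟨hne.symm, ⟨v, hv2, hv1⟩, by rwa [Set.inter_comm]⟩

/-- If every edge of a temporal graph overlaps with at most `k` other edges, then any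
maximal 0-1 timed matching `M` and any maximum 0-1 timed matching `OPT` satisfy
`|M| ≥ |OPT| / (k + 1)`. -/
theorem stmt6 {V : Type*} (τ : Sym2 V → Set ℕ) (E : Set (Sym2 V)) (hE : E.Finite)
    (k : ℕ) (hk : ∀ e ∈ E, {f | f ∈ E ∧ Overlaps τ e f}.ncard ≤ k)
    (M OPT : Set (Sym2 V)) (hME : M ⊆ E) (hOE : OPT ⊆ E)
    (hM : IsTimedMatching τ M) (hOPT : IsTimedMatching τ OPT)
    (hMmaximal : ∀ e ∈ E, e ∉ M → ¬ IsTimedMatching τ (M ∪ {e}))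
    (hOPTmax : ∀ M' ⊆ E, IsTimedMatching τ M' → M'.ncard ≤ OPT.ncard) :
    (OPT.ncard : ℝ) / (k + 1) ≤ (M.ncard : ℝ) := by
  classical
  -- every edge of OPT is in M or overlaps an edge of M
  have key : ∀ e ∈ OPT, ∃ f ∈ M, e = f ∨ Overlaps τ f e := by
    intro e he
    by_cases heM : e ∈ M
    · exact ⟨e, heM, Or.inl rfl⟩
    · have hne := hMmaximal e (hOE he) heM
      rw [IsTimedMatching] at hne
      push_neg at hne
      obtain ⟨a, ha, b, hb, hab⟩ := hne
      rcases ha with ha | ha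
      · rcases hb with hb | hb
        · exact absurd hab (hM a ha b hb)
        · simp only [Set.mem_singleton_iff] at hb
          subst hb
          exact ⟨a, ha, Or.inr hab⟩
      · simp only [Set.mem_singleton_iff] at ha
        subst ha
        rcases hb with hb | hb
        · exact ⟨b, hb, Or.inr (overlaps_symm τ hab)⟩
        · simp only [Set.mem_singleton_iff] at hb
          subst hb
          exact absurd rfl hab.1
  have hOf : OPT.Finite := hE.subset hOE
  have hMf : M.Finite := hE.subset hME
  set Of := hOf.toFinset with hOfdef
  set Mf := hMf.toFinset with hMfdef
  -- the assignment map
  have key' : ∀ e : Sym2 V, ∃ f, e ∈ OPT → f ∈ M ∧ (e = f ∨ Overlaps τ f e) := by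
    intro e
    by_cases he : e ∈ OPT
    · obtain ⟨f, hf, hor⟩ := key e he
      exact ⟨f, fun _ => ⟨hf, hor⟩⟩
    · exact ⟨e, fun h => absurd h he⟩
  choose φ hφ using key'
  have himg : Of.image φ ⊆ Mf := by
    intro f hf
    simp only [Finset.mem_image] at hf
    obtain ⟨e, he, rfl⟩ := hf
    rw [hOfdef, Set.Finite.mem_toFinset] at he
    rw [hMfdef, Set.Finite.mem_toFinset]
    exact (hφ e he).1
  have hfiber : ∀ f ∈ Of.image φ, (Of.filter (fun e => φ e = f)).card ≤ k + 1 := by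
    intro f hf
    have hfM : f ∈ M := by
      have := himg hf; rwa [hMfdef, Set.Finite.mem_toFinset] at this
    have hT : ({g | g ∈ E ∧ Overlaps τ f g}).Finite :=
      hE.subset (fun g hg => hg.1)
    have hTcard : hT.toFinset.card ≤ k := by
      rw [← Set.ncard_eq_toFinset_card _ hT]
      exact hk f (hME hfM)
    have hsub : Of.filter (fun e => φ e = f) ⊆ insert f hT.toFinset := by
      intro e he
      simp only [Finset.mem_filter] at he
      obtain ⟨heO, heq⟩ := he
      rw [hOfdef, Set.Finite.mem_toFinset] at heO
      obtain ⟨hfM', hor⟩ := hφ e heO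
      rw [heq] at hor
      rcases hor with h | h
      · subst h; exact Finset.mem_insert_self _ _
      · refine Finset.mem_insert_of_mem ?_
        rw [Set.Finite.mem_toFinset]
        exact ⟨hOE heO, h⟩
    calc (Of.filter (fun e => φ e = f)).card ≤ (insert f hT.toFinset).card :=
          Finset.card_le_card hsub
      _ ≤ hT.toFinset.card + 1 := Finset.card_insert_le _ _
      _ ≤ k + 1 := by omega
  have hmain : Of.card ≤ (k + 1) * Mf.card := by
    calc Of.card ≤ (k + 1) * (Of.image φ).card :=
          Finset.card_le_mul_card_image _ _ hfiber
      _ ≤ (k + 1) * Mf.card := by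
          exact Nat.mul_le_mul_left _ (Finset.card_le_card himg)
  have hcard : OPT.ncard ≤ (k + 1) * M.ncard := by
    rwa [Set.ncard_eq_toFinset_card _ hOf, Set.ncard_eq_toFinset_card M hMf]
  have hpos : (0:ℝ) < (k:ℝ) + 1 := by positivity
  rw [div_le_iff₀ hpos]
  have : (OPT.ncard : ℝ) ≤ ((k + 1) * M.ncard : ℕ) := by exact_mod_cast hcard
  push_cast at this ⊢
  linarith
end

section
/- Given a properly edge-coloured path P on vertices v_0,…,v_{n−1} with edge colours from {n,…,n+c−1}, construct a temporal star with center r and one leaf ν_i per path edge (v_i, v_{i+1}), where the edge from r to ν_i exists during the time intervals [i, i+2) and [c_i, c_i+1) with c_i the colour of (v_i, v_{i+1}). Then a set M of star edges is a 0-1 timed matching of the temporal star if and only if the corresponding set of path edges {(v_i, v_{i+1}) : e_{rν_i} ∈ M} is a rainbow matching of P (i.e., a matching with pairwise distinct colours), and the two sets have equal cardinality. -/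
/-- Rainbow-matching / temporal-star reduction.  The path has vertices `v_0, …, v_{n-1}`
and edges `i = (v_i, v_{i+1})` for `i < n - 1`, properly coloured by `c i ∈ [n, n + C)`.
The star edge `e_{r ν_i}` exists during the timesteps `[i, i+2) ∪ [c i, c i + 1)`.
A set `M` of star-edge indices is a 0-1 timed matching of the temporal star
(pairwise time-disjoint, since all star edges share the center `r`) iff the
corresponding set of path edges is a rainbow matching of the path.
(The two sets are indexed by the same set `M`, hence have equal cardinality.) -/
theorem stmt7 (n C : ℕ) (hn : 2 ≤ n) (c : Fin (n - 1) → ℕ)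
    (hc : ∀ i, n ≤ c i ∧ c i < n + C)
    (hproper : ∀ i j : Fin (n - 1), (i : ℕ) + 1 = (j : ℕ) → c i ≠ c j)
    (M : Finset (Fin (n - 1))) :
    (∀ i ∈ M, ∀ j ∈ M, i ≠ j →
        (Set.Ico (i : ℕ) ((i : ℕ) + 2) ∪ Set.Ico (c i) (c i + 1)) ∩
          (Set.Ico (j : ℕ) ((j : ℕ) + 2) ∪ Set.Ico (c j) (c j + 1)) = ∅)
      ↔
    (∀ i ∈ M, ∀ j ∈ M, i ≠ j →
        (i : ℕ) + 1 ≠ (j : ℕ) ∧ (j : ℕ) + 1 ≠ (i : ℕ) ∧ c i ≠ c j) := by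
  constructor
  · intro h i hi j hj hij
    have he := h i hi j hj hij
    have key : ∀ x : ℕ, x ∈ (Set.Ico (i : ℕ) ((i : ℕ) + 2) ∪ Set.Ico (c i) (c i + 1)) ∩
          (Set.Ico (j : ℕ) ((j : ℕ) + 2) ∪ Set.Ico (c j) (c j + 1)) → False := by
      intro x hx; rw [he] at hx; exact hx
    refine ⟨?_, ?_, ?_⟩
    · intro heq
      exact key ((i:ℕ)+1) ⟨Or.inl ⟨by omega, by omega⟩, Or.inl ⟨by omega, by omega⟩⟩
    · intro heq
      exact key ((j:ℕ)+1) ⟨Or.inl ⟨by omega, by omega⟩, Or.inl ⟨by omega, by omega⟩⟩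
    · intro heq
      exact key (c i) ⟨Or.inr ⟨le_refl _, by omega⟩, Or.inr ⟨by omega, by omega⟩⟩
  · intro h i hi j hj hij
    obtain ⟨h1, h2, h3⟩ := h i hi j hj hij
    have hij' : (i : ℕ) ≠ (j : ℕ) := fun e => hij (Fin.ext e)
    obtain ⟨hci1, hci2⟩ := hc i
    obtain ⟨hcj1, hcj2⟩ := hc j
    have hi2 : (i : ℕ) < n - 1 := i.isLt
    have hj2 : (j : ℕ) < n - 1 := j.isLt
    ext x
    simp only [Set.mem_inter_iff, Set.mem_union, Set.mem_Ico, Set.mem_empty_iff_false,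
      iff_false, not_and, not_or]
    rintro (⟨ha1, ha2⟩ | ⟨ha1, ha2⟩) <;> constructor <;> intro hb1 hb2 <;> omega
end

section
/- In the reduction from Maximum Independent Set: given a finite simple graph G = (V, E) with edges labelled by distinct integers, construct the temporal star with center r and a leaf ν(v) for each v ∈ V, where edge e_{r ν(v)} exists on intervals [a_{vw}, a_{vw}+1) for each edge (v,w) ∈ E incident on v (and on a distinct private interval if v is isolated). Then a set M of star edgesis a 0-1 timed matching if and only if {v : e_{rν(v)} ∈ M} is an independent set of G, and |{v : e_{rν(v)} ∈ M}| = |M|. -/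
/-- Reduction from Maximum Independent Set.  Given a finite simple graph `G` whose
edges carry distinct integer labels `a`, and distinct private labels `b v` (disjoint
from the edge labels) for the vertices, the temporal star has center `r` and one leaf
`ν(v)` per vertex `v`; the star edge `e_{r ν(v)}` exists at the timesteps `a e` for
the edges `e` of `G` incident on `v`, plus at the private timestep `b v` if `v` is
isolated.  Since all star edges share the center `r`, a set `M` of star edges (indexed
by vertices of `G`) is a 0-1 timed matching iff the timestep sets are pairwise
disjoint, which happens iff `{v : e_{rν(v)} ∈ M}` is an independent set of `G`
(the two sets trivially have the same cardinality, being indexed by the same set). -/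
theorem stmt10 {V : Type*} [Fintype V] [DecidableEq V]
    (G : SimpleGraph V) [DecidableRel G.Adj]
    (a : Sym2 V → ℕ) (b : V → ℕ)
    (ha : ∀ e ∈ G.edgeSet, ∀ f ∈ G.edgeSet, a e = a f → e = f)
    (hb : Function.Injective b)
    (hab : ∀ e ∈ G.edgeSet, ∀ v : V, a e ≠ b v)
    (τ : V → Set ℕ)
    (hτ : ∀ v : V, τ v =
      {t | ∃ e ∈ G.incidenceSet v, a e = t} ∪
        {t | (∀ w, ¬ G.Adj v w) ∧ t = b v})
    (M : Set V) :
    (∀ u ∈ M, ∀ v ∈ M, u ≠ v → τ u ∩ τ v = ∅) ↔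
      (∀ u ∈ M, ∀ v ∈ M, ¬ G.Adj u v) := by
  constructor
  · intro h u hu v hv hadj
    have hne : u ≠ v := G.ne_of_adj hadj
    have hdisj := h u hu v hv hne
    have hmem : a s(u, v) ∈ τ u ∩ τ v := by
      constructor
      · rw [hτ u]
        exact Or.inl ⟨s(u, v), ⟨hadj, Sym2.mem_mk_left u v⟩, rfl⟩
      · rw [hτ v]
        exact Or.inl ⟨s(u, v), ⟨hadj, Sym2.mem_mk_right u v⟩, rfl⟩
    rw [hdisj] at hmem
    exact hmem
  · intro h u hu v hv hne
    ext t
    simp only [Set.mem_inter_iff, Set.mem_empty_iff_false, iff_false]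
    rintro ⟨htu, htv⟩
    rw [hτ u] at htu
    rw [hτ v] at htv
    rcases htu with ⟨e, ⟨heE, heu⟩, hea⟩ | ⟨_, hbu⟩ <;>
      rcases htv with ⟨f, ⟨hfE, hfv⟩, hfa⟩ | ⟨hiso, hbv⟩
    · have hef : e = f := ha e heE f hfE (hea.trans hfa.symm)
      subst hef
      have : e = s(u, v) := (Sym2.mem_and_mem_iff hne).mp ⟨heu, hfv⟩
      subst this
      exact h u hu v hv heE
    · exact hab e heE v (hea.trans hbv)
    · exact hab f hfE u (hfa.trans hbu)
    · exact hne (hb (hbu ▸ hbv ▸ rfl))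
end

section
/- Let T_v be a rooted temporal tree with root v and children u_1,…,u_k, each with a known maximum 0-1 timed matching M_{u_i}. Define the maximum allowable set A_v as a maximum-cardinality set of edges incident on v such that A_v ∪ ⋃_i M_{u_i} is a 0-1 timed matching of T_v. If for every edge e_{v u_i} incident on v there is no 0-1 timed matching M'_{u_i} of T_{u_i} with |M'_{u_i}| = |M_{u_i}| that avoids all edges overlapping e_{v u_i}, while M_{u_i} contains an edge overlapping e_{v u_i}, and additionally A_v = ∅, then ⋃_i M_{u_i} is a maximum 0-1 timed matching of T_v. -/
/-- A finite rooted tree given by a parent function: the root is its own parent and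
every vertex reaches the root by iterating `parent`. -/
structure ParentTree (V : Type*) where
  parent : V → V
  root : V
  parent_root : parent root = root
  reaches_root : ∀ v : V, ∃ k : ℕ, parent^[k] v = root

namespace ParentTree

variable {V : Type*}

/-- `w` lies in the subtree rooted at `u`. -/
def inSubtree (T : ParentTree V) (u w : V) : Prop :=
  ∃ k : ℕ, T.parent^[k] w = u

/-- Each non-root vertex `w` is identified with the edge `{w, parent w}`; the edges of
the subtree `T_u` are those identified with the vertices of the subtree other than `u`. -/
def subtreeEdges (T : ParentTree V) (u : V) : Set V :=
  {w | T.inSubtree u w ∧ w ≠ u}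

/-- The edges (identified with vertices) `w` and `x` overlap: they are distinct, the
edges `{w, parent w}` and `{x, parent x}` share an endpoint, and they exist at a common
timestep (`τ w` is the set of timesteps of the edge `{w, parent w}`). -/
def Overlaps (T : ParentTree V) (τ : V → Set ℕ) (w x : V) : Prop :=
  w ≠ x ∧
    (w = x ∨ w = T.parent x ∨ T.parent w = x ∨ T.parent w = T.parent x) ∧
    (τ w ∩ τ x).Nonempty

/-- A 0-1 timed matching: pairwise non-overlapping set of edges. -/
def IsTimedMatching (T : ParentTree V) (τ : V → Set ℕ) (M : Set V) : Prop :=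
  ∀ w ∈ M, ∀ x ∈ M, ¬ T.Overlaps τ w x

end ParentTree



namespace ParentTree

variable {V : Type*}

/-- If a vertex lies on a cycle it must be the root. -/
lemma eq_root_of_cycle (T : ParentTree V) {w : V} {m : ℕ} (hm : 0 < m)
    (h : T.parent^[m] w = w) : w = T.root := by
  obtain ⟨k, hk⟩ := T.reaches_root w
  have hfix : ∀ t : ℕ, T.parent^[m * t] w = w := by
    intro t
    rw [Function.iterate_mul]
    exact Function.iterate_fixed h t
  have hroot : ∀ n : ℕ, T.parent^[n] T.root = T.root :=
    fun n => Function.iterate_fixed T.parent_root n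
  have hk' : k ≤ m * k := Nat.le_mul_of_pos_left k hm
  calc w = T.parent^[m * k] w := (hfix k).symm
    _ = T.parent^[m * k - k] (T.parent^[k] w) := by
        rw [← Function.iterate_add_apply, Nat.sub_add_cancel hk']
    _ = T.root := by rw [hk, hroot]

lemma child_eq_of_le (T : ParentTree V) {v u₁ u₂ w : V} {k j : ℕ}
    (h₁ : T.parent u₁ = v) (h₂ : T.parent u₂ = v) (hu₂ : u₂ ≠ v)
    (hk : T.parent^[k] w = u₁) (hj : T.parent^[j] w = u₂) (hkj : k ≤ j) :
    u₁ = u₂ := by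
  have h : T.parent^[j - k] u₁ = u₂ := by
    rw [← hk, ← Function.iterate_add_apply, Nat.sub_add_cancel hkj, hj]
  rcases Nat.eq_zero_or_pos (j - k) with h0 | hpos
  · rw [h0] at h; exact h
  · exfalso
    obtain ⟨n, hn⟩ := Nat.exists_eq_add_of_lt hpos
    rw [hn] at h
    have h' : T.parent^[n] v = u₂ := by
      rw [← h₁]
      rw [show 0 + n + 1 = n + 1 by omega, Function.iterate_succ_apply] at h
      exact h
    have hcyc : T.parent^[n + 1] v = v := by
      rw [Function.iterate_succ_apply', h', h₂]
    have hvroot : v = T.root := T.eq_root_of_cycle (Nat.succ_pos n) hcyc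
    have : u₂ = T.root := by
      rw [← h', hvroot]; exact Function.iterate_fixed T.parent_root n
    exact hu₂ (this.trans hvroot.symm)

/-- Distinct children of `v` have disjoint subtrees. -/
lemma subtree_disjoint (T : ParentTree V) {v u₁ u₂ w : V}
    (h₁ : T.parent u₁ = v) (hu₁ : u₁ ≠ v) (h₂ : T.parent u₂ = v) (hu₂ : u₂ ≠ v)
    (hw₁ : T.inSubtree u₁ w) (hw₂ : T.inSubtree u₂ w) : u₁ = u₂ := by
  obtain ⟨k, hk⟩ := hw₁
  obtain ⟨j, hj⟩ := hw₂
  rcases le_total k j with h | h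
  · exact T.child_eq_of_le h₁ h₂ hu₂ hk hj h
  · exact (T.child_eq_of_le h₂ h₁ hu₁ hj hk h).symm

/-- Every edge of `T_v` lies in the subtree of a child of `v`. -/
lemma exists_child (T : ParentTree V) {v w : V} (hw : w ∈ T.subtreeEdges v) :
    ∃ u, T.parent u = v ∧ u ≠ v ∧ T.inSubtree u w := by
  classical
  obtain ⟨⟨k, hk⟩, hwv⟩ := hw
  have hex : ∃ k, T.parent^[k] w = v := ⟨k, hk⟩
  set n := Nat.find hex with hn
  have hspec : T.parent^[n] w = v := Nat.find_spec hex
  have hnpos : 0 < n := by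
    rcases Nat.eq_zero_or_pos n with h0 | h
    · exact absurd (by rwa [h0] at hspec) hwv
    · exact h
  refine ⟨T.parent^[n - 1] w, ?_, ?_, n - 1, rfl⟩
  · have : T.parent (T.parent^[n - 1] w) = T.parent^[(n - 1) + 1] w :=
      (Function.iterate_succ_apply' _ _ _).symm
    rw [this, Nat.sub_add_cancel hnpos, hspec]
  · intro hcon
    exact Nat.find_min hex (Nat.sub_lt hnpos one_pos) hcon

end ParentTree

lemma ncard_biUnion_eq' {ι V : Type*} [Fintype V] (s : Finset ι) (f : ι → Set V)
    (hdisj : ∀ i ∈ s, ∀ j ∈ s, i ≠ j → Disjoint (f i) (f j)) :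
    (⋃ i ∈ s, f i).ncard = ∑ i ∈ s, (f i).ncard := by
  classical
  induction s using Finset.induction_on with
  | empty => simp
  | @insert a s ha ih =>
    rw [Finset.set_biUnion_insert, Finset.sum_insert ha,
      Set.ncard_union_eq ?_ (Set.toFinite _) (Set.toFinite _),
      ih (fun i hi j hj hij => hdisj i (Finset.mem_insert_of_mem hi)
        j (Finset.mem_insert_of_mem hj) hij)]
    rw [Set.disjoint_iUnion₂_right]
    intro i hi
    exact hdisj a (Finset.mem_insert_self a s) i (Finset.mem_insert_of_mem hi)
      (fun h => ha (h ▸ hi))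

/-- Lemma on the empty maximum allowable set.  Let `v` have children `u` with known
maximum 0-1 timed matchings `M u` of the subtrees `T_u`.  Suppose for every child `u`
(whose edge to `v` is identified with `u` itself): `M u` contains an edge overlapping
the edge `e_{v u}`, and there is no 0-1 timed matching `M'` of `T_u` with
`|M'| = |M u|` avoiding all edges overlapping `e_{v u}`.  Suppose moreover that the
maximum allowable set is empty, i.e. no edge incident on `v` can be added to
`⋃ M u` keeping a 0-1 timed matching.  Then `⋃ M u` is a maximum 0-1 timed matching
of `T_v`. -/
theorem stmt13 {V : Type*} [Fintype V] (T : ParentTree V) (τ : V → Set ℕ) (v : V)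
    (M : V → Set V)
    (hM : ∀ u : V, T.parent u = v → u ≠ v →
      M u ⊆ T.subtreeEdges u ∧ T.IsTimedMatching τ (M u) ∧
        ∀ M' ⊆ T.subtreeEdges u, T.IsTimedMatching τ M' → M'.ncard ≤ (M u).ncard)
    (hforced : ∀ u : V, T.parent u = v → u ≠ v →
      (∃ f ∈ M u, T.Overlaps τ u f) ∧
        ¬ ∃ M' : Set V, M' ⊆ T.subtreeEdges u ∧ T.IsTimedMatching τ M' ∧
            M'.ncard = (M u).ncard ∧ ∀ f ∈ M', ¬ T.Overlaps τ u f)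
    (hallowable : ∀ u : V, T.parent u = v → u ≠ v →
      ¬ T.IsTimedMatching τ
          (insert u (⋃ w ∈ {w : V | T.parent w = v ∧ w ≠ v}, M w))) :
    ∀ M' ⊆ T.subtreeEdges v, T.IsTimedMatching τ M' →
      M'.ncard ≤ (⋃ u ∈ {u : V | T.parent u = v ∧ u ≠ v}, M u).ncard := by
  classical
  intro M' hM'sub hM'match
  let Cf : Finset V := Finset.univ.filter (fun u => T.parent u = v ∧ u ≠ v)
  have hmemC : ∀ u, u ∈ Cf ↔ (T.parent u = v ∧ u ≠ v) := by
    intro u; simp [Cf]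
  let Sub : V → Set V := fun u => {w | T.inSubtree u w}
  have hSubdisj : ∀ u₁ ∈ Cf, ∀ u₂ ∈ Cf, u₁ ≠ u₂ → Disjoint (Sub u₁) (Sub u₂) := by
    intro u₁ h1 u₂ h2 hne
    rw [hmemC] at h1 h2
    rw [Set.disjoint_left]
    intro w hw1 hw2
    exact hne (T.subtree_disjoint h1.1 h1.2 h2.1 h2.2 hw1 hw2)
  let S : V → Set V := fun u => M' ∩ Sub u
  have hScover : M' = ⋃ u ∈ Cf, S u := by
    apply Set.Subset.antisymm
    · intro w hw
      obtain ⟨u, hu1, hu2, hu3⟩ := T.exists_child (hM'sub hw)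
      exact Set.mem_biUnion ((hmemC u).2 ⟨hu1, hu2⟩) ⟨hw, hu3⟩
    · exact Set.iUnion₂_subset fun u _ => Set.inter_subset_left
  have hMsubSub : ∀ u ∈ Cf, M u ⊆ Sub u := by
    intro u hu
    obtain ⟨hpu, hnu⟩ := (hmemC u).1 hu
    exact fun w hw => ((hM u hpu hnu).1 hw).1
  have hRHSset : (⋃ u ∈ {u : V | T.parent u = v ∧ u ≠ v}, M u) = ⋃ u ∈ Cf, M u := by
    ext w
    simp only [Set.mem_iUnion, Set.mem_setOf_eq, exists_prop]
    constructor
    · rintro ⟨u, hu, hw⟩; exact ⟨u, (hmemC u).2 hu, hw⟩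
    · rintro ⟨u, hu, hw⟩; exact ⟨u, (hmemC u).1 hu, hw⟩
  have hkey : ∀ u ∈ Cf, (S u).ncard ≤ (M u).ncard := by
    intro u hu
    obtain ⟨hpu, hnu⟩ := (hmemC u).1 hu
    obtain ⟨hMsub, hMmatch, hMmax⟩ := hM u hpu hnu
    set Mu' : Set V := M' ∩ T.subtreeEdges u with hMu'
    have hMu'sub : Mu' ⊆ T.subtreeEdges u := Set.inter_subset_right
    have hMu'match : T.IsTimedMatching τ Mu' := fun w hw x hx =>
      hM'match w hw.1 x hx.1
    have hle : Mu'.ncard ≤ (M u).ncard := hMmax Mu' hMu'sub hMu'match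
    by_cases hum : u ∈ M'
    · have hSsub : S u ⊆ insert u Mu' := by
        rintro w ⟨hw1, hw2⟩
        rcases eq_or_ne w u with rfl | hne
        · exact Set.mem_insert _ _
        · exact Set.mem_insert_of_mem _ ⟨hw1, hw2, hne⟩
      have hlt : Mu'.ncard < (M u).ncard := by
        refine lt_of_le_of_ne hle ?_
        intro heq
        exact (hforced u hpu hnu).2 ⟨Mu', hMu'sub, hMu'match, heq,
          fun f hf => hM'match u hum f hf.1⟩
      calc (S u).ncard ≤ (insert u Mu').ncard :=
            Set.ncard_le_ncard hSsub (Set.toFinite _)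
        _ ≤ Mu'.ncard + 1 := Set.ncard_insert_le _ _
        _ ≤ (M u).ncard := hlt
    · have hSsub : S u ⊆ Mu' := by
        rintro w ⟨hw1, hw2⟩
        rcases eq_or_ne w u with rfl | hne
        · exact absurd hw1 hum
        · exact ⟨hw1, hw2, hne⟩
      exact le_trans (Set.ncard_le_ncard hSsub (Set.toFinite _)) hle
  calc M'.ncard = ∑ u ∈ Cf, (S u).ncard := by
        rw [hScover]
        exact ncard_biUnion_eq' Cf S (fun i hi j hj hij =>
          Set.disjoint_of_subset Set.inter_subset_right Set.inter_subset_right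
            (hSubdisj i hi j hj hij))
    _ ≤ ∑ u ∈ Cf, (M u).ncard := Finset.sum_le_sum hkey
    _ = (⋃ u ∈ {u : V | T.parent u = v ∧ u ≠ v}, M u).ncard := by
        rw [hRHSset]
        exact (ncard_biUnion_eq' Cf M (fun i hi j hj hij =>
          Set.disjoint_of_subset (hMsubSub i hi) (hMsubSub j hj)
            (hSubdisj i hi j hj hij))).symm
end

section
/- Let N(e) denote the number of edges overlapping with edge e in a temporal graph with edge set E, |E| = m, and let N* = (1/m)·∑_{e∈E} N(e) be the average overlapping number. Then the greedy algorithm that repeatedly selects an edge with minimum current overlapping number and deletes it together with its overlapping edges outputs a 0-1 timed matching of size at least m / (N* + 1); in particular, since any 0-1 timed matching has size at most m, the greedy output is a 1/(N*+1)-approximation of the maximum 0-1 timed matching. -/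
/-- The overlapping number of the edge `e` within the edge set `S`. -/
noncomputable def ovNum {V : Type*} (τ : Sym2 V → Set ℕ) (S : Set (Sym2 V)) (e : Sym2 V) : ℕ :=
  {f ∈ S | Overlaps τ e f}.ncard

/-! Let `D i = S i \ S (i + 1)` be the block deleted at step `i`: the pick `p i` and the `N i`
edges overlapping it, each of which has overlapping number at least `N i` in `E` (the pick is
minimal, and overlapping numbers only decrease as edges are removed). Hence
`∑ |D i|² = ∑ (N i + 1) |D i| ≤ ∑_{e ∈ E} (N(e) + 1) = m (N* + 1)`, while `∑ |D i| = m`, so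
Cauchy–Schwarz gives `m² ≤ t · m (N* + 1)`. -/

open Finset

section Counting

variable {α ι : Type*}

theorem Finset.sum_eq_sum_range_sdiff_add {M : Type*} [AddCommMonoid M] [DecidableEq α]
    {S : ℕ → Finset α} {t : ℕ} (hS : ∀ i < t, S (i + 1) ⊆ S i) (g : α → M) :
    ∑ x ∈ S 0, g x = ∑ i ∈ range t, ∑ x ∈ S i \ S (i + 1), g x + ∑ x ∈ S t, g x := by
  induction t with
  | zero => simp
  | succ t ih =>
    rw [ih fun i hi ↦ hS i (by omega), sum_range_succ, add_assoc,
      sum_sdiff (hS t t.lt_succ_self)]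

theorem Finset.subset_of_succ_subset_of_le_of_le {S : ℕ → Finset α} {t : ℕ}
    (hS : ∀ i < t, S (i + 1) ⊆ S i) {i j : ℕ} (hij : i ≤ j) (hjt : j ≤ t) : S j ⊆ S i := by
  induction j, hij using Nat.le_induction with
  | base => rfl
  | succ j _ ih => exact (hS j (by omega)).trans (ih (by omega))

theorem sq_sum_card_le_card_mul_sum_weight (s : Finset ι) (D : ι → Finset α) (n : ι → ℕ)
    (w : α → ℕ) (hcard : ∀ i ∈ s, #(D i) = n i + 1) (hw : ∀ i ∈ s, ∀ x ∈ D i, n i ≤ w x) :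
    (∑ i ∈ s, #(D i)) ^ 2 ≤ #s * ∑ i ∈ s, ∑ x ∈ D i, (w x + 1) := by
  refine sq_sum_le_card_mul_sum_sq.trans (Nat.mul_le_mul_left _ (sum_le_sum fun i hi ↦ ?_))
  calc #(D i) ^ 2 = ∑ _x ∈ D i, (n i + 1) := by rw [sum_const, smul_eq_mul, hcard i hi, sq]
    _ ≤ ∑ x ∈ D i, (w x + 1) := sum_le_sum fun x hx ↦ by simpa using hw i hi x hx

theorem div_div_add_one_le_of_sq_le {m A t : ℕ} (h : m ^ 2 ≤ t * (A + m)) :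
    (m : ℝ) / ((A : ℝ) / m + 1) ≤ t := by
  rcases Nat.eq_zero_or_pos m with rfl | hm
  · simp
  have hm' : (0 : ℝ) < m := by exact_mod_cast hm
  rw [div_le_iff₀ (by positivity), ← mul_le_mul_iff_of_pos_right hm']
  calc (m : ℝ) * m = m ^ 2 := (sq _).symm
    _ ≤ t * (A + m) := by exact_mod_cast h
    _ = t * (A / m + 1) * m := by field_simp

theorem card_image_range_of_ne [DecidableEq α] {t : ℕ} {p : ℕ → α}
    (h : ∀ i j, i < j → j < t → p i ≠ p j) : #((range t).image p) = t := by
  refine (card_image_of_injOn fun i hi j hj hij ↦ ?_).trans (card_range t)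
  rw [coe_range, Set.mem_Iio] at hi hj
  rcases lt_trichotomy i j with hlt | heq | hgt
  · exact absurd hij (h i j hlt hj)
  · exact heq
  · exact absurd hij.symm (h j i hgt hi)

end Counting

section TemporalGraph

variable {V : Type*} {τ : Sym2 V → Set ℕ}

theorem Overlaps.symm {e f : Sym2 V} (h : Overlaps τ e f) : Overlaps τ f e := by
  obtain ⟨hne, ⟨v, hve, hvf⟩, ⟨s, hse, hsf⟩⟩ := h
  exact ⟨hne.symm, ⟨v, hvf, hve⟩, ⟨s, hsf, hse⟩⟩

theorem ovNum_mono {A B : Set (Sym2 V)} (hAB : A ⊆ B) (hB : B.Finite) (e : Sym2 V) :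
    ovNum τ A e ≤ ovNum τ B e :=
  Set.ncard_le_ncard (fun _ hx ↦ ⟨hAB hx.1, hx.2⟩) (hB.subset (Set.sep_subset _ _))

variable {S S' : Finset (Sym2 V)} {e : Sym2 V}

theorem mem_iff_of_greedyStep
    (h : (S' : Set (Sym2 V)) = {x ∈ (S : Set (Sym2 V)) | x ≠ e ∧ ¬ Overlaps τ e x})
    {x : Sym2 V} : x ∈ S' ↔ x ∈ S ∧ x ≠ e ∧ ¬ Overlaps τ e x := by
  rw [← Finset.mem_coe, h, Set.mem_ofPred_eq, Finset.mem_coe]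

theorem subset_of_greedyStep
    (h : (S' : Set (Sym2 V)) = {x ∈ (S : Set (Sym2 V)) | x ≠ e ∧ ¬ Overlaps τ e x}) :
    S' ⊆ S :=
  fun _ hx ↦ ((mem_iff_of_greedyStep h).1 hx).1

theorem card_sdiff_of_greedyStep [DecidableEq V]
    (h : (S' : Set (Sym2 V)) = {x ∈ (S : Set (Sym2 V)) | x ≠ e ∧ ¬ Overlaps τ e x})
    (he : e ∈ S) : #(S \ S') = ovNum τ S e + 1 := by
  have hdel : ((S \ S' : Finset (Sym2 V)) : Set (Sym2 V)) =
      insert e {x ∈ (S : Set (Sym2 V)) | Overlaps τ e x} := by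
    ext x
    simp only [coe_sdiff, Set.mem_sdiff, mem_coe, mem_iff_of_greedyStep h, Set.mem_insert_iff,
      Set.mem_ofPred_eq]
    rcases eq_or_ne x e with rfl | hx <;> tauto
  rw [← Set.ncard_coe_finset, hdel, Set.ncard_insert_of_notMem (fun hx ↦ hx.2.1 rfl)
    (S.finite_toSet.subset (Set.sep_subset _ _)), ovNum]

theorem isTimedMatching_image_range [DecidableEq V] {t : ℕ} {p : ℕ → Sym2 V}
    (h : ∀ i j, i < j → j < t → ¬ Overlaps τ (p i) (p j)) :
    IsTimedMatching τ ↑((range t).image p) := by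
  simp only [IsTimedMatching, coe_image, coe_range, Set.forall_mem_image, Set.mem_Iio]
  intro i hi j hj hov
  rcases lt_trichotomy i j with hij | rfl | hji
  · exact h i j hij hj hov
  · exact hov.1 rfl
  · exact h j i hji hi hov.symm

variable {t : ℕ} {S : ℕ → Finset (Sym2 V)} {p : ℕ → Sym2 V}

theorem ne_and_not_overlaps_of_greedy (hp : ∀ i < t, p i ∈ S i)
    (hstep : ∀ i < t, (↑(S (i + 1)) : Set (Sym2 V)) =
      {x ∈ (↑(S i) : Set (Sym2 V)) | x ≠ p i ∧ ¬ Overlaps τ (p i) x})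
    {i j : ℕ} (hij : i < j) (hjt : j < t) : p j ≠ p i ∧ ¬ Overlaps τ (p i) (p j) :=
  ((mem_iff_of_greedyStep (hstep i (hij.trans hjt))).1 (subset_of_succ_subset_of_le_of_le
    (fun k hk ↦ subset_of_greedyStep (hstep k hk)) hij hjt.le (hp j hjt))).2

theorem sq_card_le_mul_sum_ovNum_add_card [DecidableEq V] {E : Finset (Sym2 V)}
    (hS0 : S 0 = E) (hSt : S t = ∅) (hp : ∀ i < t, p i ∈ S i)
    (hmin : ∀ i < t, ∀ x ∈ S i, ovNum τ ↑(S i) (p i) ≤ ovNum τ ↑(S i) x)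
    (hstep : ∀ i < t, (↑(S (i + 1)) : Set (Sym2 V)) =
      {x ∈ (↑(S i) : Set (Sym2 V)) | x ≠ p i ∧ ¬ Overlaps τ (p i) x}) :
    #E ^ 2 ≤ t * (∑ e ∈ E, ovNum τ ↑E e + #E) := by
  have hsub : ∀ i < t, S (i + 1) ⊆ S i := fun i hi ↦ subset_of_greedyStep (hstep i hi)
  have hsplit (g : Sym2 V → ℕ) : ∑ x ∈ E, g x = ∑ i ∈ range t, ∑ x ∈ S i \ S (i + 1), g x := by
    rw [← hS0, sum_eq_sum_range_sdiff_add hsub, hSt, sum_empty, add_zero]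
  have hE : #E = ∑ i ∈ range t, #(S i \ S (i + 1)) := by simpa using hsplit 1
  have hw : ∑ e ∈ E, ovNum τ ↑E e + #E =
      ∑ i ∈ range t, ∑ x ∈ S i \ S (i + 1), (ovNum τ ↑E x + 1) := by
    rw [card_eq_sum_ones, ← sum_add_distrib, hsplit]
  have hSE : ∀ i ∈ range t, (S i : Set (Sym2 V)) ⊆ E := fun i hi ↦
    hS0 ▸ coe_subset.2 (subset_of_succ_subset_of_le_of_le hsub i.zero_le (mem_range.1 hi).le)
  rw [hw, hE]
  simpa only [card_range] using sq_sum_card_le_card_mul_sum_weight _ _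
    (fun i ↦ ovNum τ ↑(S i) (p i)) _
    (fun i hi ↦ card_sdiff_of_greedyStep (hstep i (mem_range.1 hi)) (hp i (mem_range.1 hi)))
    fun i hi x hx ↦ (hmin i (mem_range.1 hi) x (sdiff_subset hx)).trans
      (ovNum_mono (hSE i hi) E.finite_toSet x)

end TemporalGraph

/-- The greedy algorithm repeatedly selects an edge with minimum current overlapping
number and deletes it together with all edges overlapping it, until no edge remains.
Its output is a 0-1 timed matching of size at least `m / (N* + 1)`, where `N*` is the
average overlapping number of the edges of `E`; in particular, since every 0-1 timed
matching has size at most `m`, the output is a `1/(N*+1)`-approximation of a maximum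
0-1 timed matching. -/
theorem stmt16 {V : Type*} [DecidableEq V] (τ : Sym2 V → Set ℕ)
    (E : Finset (Sym2 V)) (t : ℕ) (S : ℕ → Finset (Sym2 V)) (p : ℕ → Sym2 V)
    (hS0 : S 0 = E) (hSt : S t = ∅)
    (hp : ∀ i < t, p i ∈ S i)
    (hmin : ∀ i < t, ∀ x ∈ S i, ovNum τ ↑(S i) (p i) ≤ ovNum τ ↑(S i) x)
    (hstep : ∀ i < t, (↑(S (i + 1)) : Set (Sym2 V)) =
      {x ∈ (↑(S i) : Set (Sym2 V)) | x ≠ p i ∧ ¬ Overlaps τ (p i) x}) :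
    IsTimedMatching τ ↑((Finset.range t).image p) ∧
    (E.card : ℝ) /
        ((∑ e ∈ E, (ovNum τ ↑E e : ℝ)) / E.card + 1) ≤
      ((Finset.range t).image p).card ∧
    ∀ OPT : Set (Sym2 V), OPT ⊆ ↑E → IsTimedMatching τ OPT →
      (OPT.ncard : ℝ) /
          ((∑ e ∈ E, (ovNum τ ↑E e : ℝ)) / E.card + 1) ≤
        ((Finset.range t).image p).card := by
  have hpicks {i j : ℕ} (hij : i < j) (hjt : j < t) :=
    ne_and_not_overlaps_of_greedy hp hstep hij hjt
  have hbound : (#E : ℝ) / ((∑ e ∈ E, (ovNum τ ↑E e : ℝ)) / #E + 1) ≤ #((range t).image p) := by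
    rw [card_image_range_of_ne fun i j hij hjt ↦ (hpicks hij hjt).1.symm]
    exact_mod_cast div_div_add_one_le_of_sq_le
      (sq_card_le_mul_sum_ovNum_add_card hS0 hSt hp hmin hstep)
  refine ⟨isTimedMatching_image_range fun i j hij hjt ↦ (hpicks hij hjt).2, hbound,
    fun OPT hOPT _ ↦ le_trans ?_ hbound⟩
  gcongr
  simpa using Set.ncard_le_ncard hOPT E.finite_toSet
end
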